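/- Let F be a weakly convex sparseness measure with parameter ρ ≤ 0, J(x) = Σ_{i=1}^N F(x_i), let γ ∈ [0,1) be a null-space constant bound for (J,A,K), let M0 > 0, and define C1 = (F(M0)/M0)·(1−γ)/(1+γ) and C2 = (α√N + C1)/(C1·σ). Let ‖x*‖₀ ≤ K, y = A x* + e, κ > 0, μ > 1. Suppose x ∈ ℝ^N satisfies A x = y, ‖x − x*‖₂ ≤ M0, (−4ρ)·‖x − x*‖₂ ≤ C1, and ‖x − x*‖₂ ≥ (2μα²N/C1)·κ + 4·C2·‖e‖₂. Then for any gradient selection g with g_i ∈ ∂F(x_i), the next PGG iterate x⁺ = x̃ + A†(y − A x̃) with x̃ = x − κ·g satisfies ‖x⁺ − x*‖₂² ≤ ‖x − x*‖₂² − (μ−1)·α²·N·κ². -/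

import Mathlib

open Filter Set

/-- Weak convexity on `[0,∞)` with parameter `ρ`. -/
def WeaklyConvexOnNonneg (F : ℝ → ℝ) (ρ : ℝ) : Prop :=
  ∀ t₁ t₂ : ℝ, 0 ≤ t₁ → 0 ≤ t₂ → ∀ l : ℝ, 0 ≤ l → l ≤ 1 →
    F (l * t₁ + (1 - l) * t₂) ≤
      l * F t₁ + (1 - l) * F t₂ - ρ * l * (1 - l) * (t₁ - t₂) ^ 2

/-- `F` is a weakly convex sparseness measure with weak-convexity parameter `ρ ≤ 0`. -/
structure IsWCSM (F : ℝ → ℝ) (ρ : ℝ) : Prop where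
  zero : F 0 = 0
  even : ∀ t, F (-t) = F t
  nontrivial : ∃ t, F t ≠ 0
  mono : ∀ s t : ℝ, 0 ≤ s → s ≤ t → F s ≤ F t
  ratio_anti : ∀ s t : ℝ, 0 < s → s ≤ t → F t / t ≤ F s / s
  rho_nonpos : ρ ≤ 0
  wconv : WeaklyConvexOnNonneg F ρ

/-- `α = lim_{t→0⁺} F(t)/t`, finite and positive, with `F(t) ≤ α|t|` for all `t`. -/
def IsAlpha (F : ℝ → ℝ) (α : ℝ) : Prop :=
  0 < α ∧ Tendsto (fun t => F t / t) (nhdsWithin 0 (Set.Ioi 0)) (nhds α) ∧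
    ∀ t : ℝ, F t ≤ α * |t|

/-- The generalized gradient set `∂F(t)`; by convention `∂F(0) = {0}`. -/
noncomputable def genGrad (F : ℝ → ℝ) (t : ℝ) : Set ℝ :=
  if t = 0 then {0}
  else {f : ℝ | ∀ ν : ℝ,
    ν * f ≤ Filter.limsup (fun θ => (F (t + θ * ν) - F t) / θ) (nhdsWithin 0 (Set.Ioi 0))}

/-- Euclidean (`ℓ2`) norm of a vector. -/
noncomputable def l2 {n : ℕ} (x : Fin n → ℝ) : ℝ := Real.sqrt (∑ i, (x i) ^ 2)

/-- `ℓ1` norm of a vector. -/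
def l1 {n : ℕ} (x : Fin n → ℝ) : ℝ := ∑ i, |x i|

/-- `ℓ0` "norm": number of nonzero entries. -/
noncomputable def l0 {n : ℕ} (x : Fin n → ℝ) : ℕ :=
  (Finset.univ.filter (fun i => x i ≠ 0)).card

/-- `z_S`: the vector equal to `z` on `S` and zero elsewhere. -/
def restr {n : ℕ} (x : Fin n → ℝ) (S : Finset (Fin n)) : Fin n → ℝ :=
  fun i => if i ∈ S then x i else 0

/-- `γ` is a null-space-constant bound for `(J, A, K)`. -/
def NSCBound {M N : ℕ} (J : (Fin N → ℝ) → ℝ) (A : Matrix (Fin M) (Fin N) ℝ)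
    (K : ℕ) (γ : ℝ) : Prop :=
  ∀ z : Fin N → ℝ, A.mulVec z = 0 → ∀ S : Finset (Fin N), S.card ≤ K →
    J (restr z S) ≤ γ * J (restr z Sᶜ)

/-- Spectral norm (`ℓ2`-operator norm) of a matrix. -/
noncomputable def opNorm2 {m n : ℕ} (A : Matrix (Fin m) (Fin n) ℝ) : ℝ :=
  sSup {c : ℝ | ∃ v : Fin n → ℝ, l2 v ≤ 1 ∧ c = l2 (A.mulVec v)}

/-!
Write `x - x* = z + w` with `w = A†e` orthogonal to `ker A` (so `σ‖w‖ ≤ ‖e‖`) and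
`z ∈ ker A`. The PGG step is `x⁺ - x* = (x - x*) - κq` with `q = (I - A†A)g`; as `I - A†A`
is the orthogonal projection onto `ker A`, `‖q‖ ≤ ‖g‖ ≤ α√N` and
`⟨q, x - x*⟩ = ⟨g, x - x*⟩ - ⟨g, w⟩`. Weak convexity bounds `⟨g, x - x*⟩` below by
`J(x) - J(x*) + ρ‖x - x*‖²`, and the null-space property applied to `z` on the support of
`x*`, together with `F(t) ≥ (F(M0)/M0) min(|t|, M0)`, gives
`J(x) - J(x*) ≥ C1 (‖x - x*‖ - ‖w‖) - α√N‖w‖`. Far from `x*` this yields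
`⟨q, x - x*⟩ ≥ μα²Nκ`, and expanding `‖x - x* - κq‖²` gives the decrease.
-/

open Matrix Topology

section Norms

variable {n : ℕ}

theorem l2_nonneg (v : Fin n → ℝ) : 0 ≤ l2 v := Real.sqrt_nonneg _

theorem l2_sq (v : Fin n → ℝ) : l2 v ^ 2 = ∑ i, v i ^ 2 :=
  Real.sq_sqrt (Finset.sum_nonneg fun _ _ => sq_nonneg _)

theorem l2_eq_norm (v : Fin n → ℝ) :
    l2 v = ‖(WithLp.toLp 2 v : EuclideanSpace ℝ (Fin n))‖ := by
  simp [l2, EuclideanSpace.norm_eq]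

theorem l2_add_le (u v : Fin n → ℝ) : l2 (u + v) ≤ l2 u + l2 v := by
  simpa only [l2_eq_norm, WithLp.toLp_add] using norm_add_le _ _

theorem l2_le_l1 (v : Fin n → ℝ) : l2 v ≤ l1 v :=
  Real.sqrt_le_iff.2 ⟨Finset.sum_nonneg fun i _ => abs_nonneg (v i),
    by simpa [l1, sq_abs] using Finset.sum_sq_le_sq_sum_of_nonneg fun i _ => abs_nonneg (v i)⟩

theorem l1_le_sqrt_mul_l2 (v : Fin n → ℝ) : l1 v ≤ √n * l2 v := by
  simpa [l1, l2] using Real.sum_mul_le_sqrt_mul_sqrt Finset.univ (fun _ => 1) fun i => |v i|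

theorem l2_sq_le_of_abs_le {v : Fin n → ℝ} {a : ℝ} (h : ∀ i, |v i| ≤ a) :
    l2 v ^ 2 ≤ n * a ^ 2 := by
  rw [l2_sq]
  calc ∑ i, v i ^ 2 ≤ ∑ _i : Fin n, a ^ 2 :=
        Finset.sum_le_sum fun i _ => sq_abs (v i) ▸ pow_le_pow_left₀ (abs_nonneg _) (h i) 2
    _ = n * a ^ 2 := by simp

theorem dotProduct_le_mul_l1 {u : Fin n → ℝ} {a : ℝ} (h : ∀ i, |u i| ≤ a)
    (v : Fin n → ℝ) : u ⬝ᵥ v ≤ a * l1 v := by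
  rw [l1, Finset.mul_sum]
  refine Finset.sum_le_sum fun i _ => ?_
  calc u i * v i ≤ |u i| * |v i| := abs_mul (u i) (v i) ▸ le_abs_self _
    _ ≤ a * |v i| := mul_le_mul_of_nonneg_right (h i) (abs_nonneg _)

theorem l2_add_sq_of_dotProduct_eq_zero {u v : Fin n → ℝ} (h : u ⬝ᵥ v = 0) :
    l2 (u + v) ^ 2 = l2 u ^ 2 + l2 v ^ 2 := by
  have : ∑ i, (u + v) i ^ 2 = ∑ i, u i ^ 2 + 2 * (u ⬝ᵥ v) + ∑ i, v i ^ 2 := by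
    simp only [dotProduct, Finset.mul_sum, ← Finset.sum_add_distrib]
    exact Finset.sum_congr rfl fun i _ => by simp only [Pi.add_apply]; ring
  rw [l2_sq, l2_sq, l2_sq, this, h]
  ring

theorem l2_sub_smul_sq (d q : Fin n → ℝ) (κ : ℝ) :
    l2 (d - κ • q) ^ 2 = l2 d ^ 2 - 2 * κ * (q ⬝ᵥ d) + κ ^ 2 * l2 q ^ 2 := by
  simp only [l2_sq, dotProduct, Finset.mul_sum, ← Finset.sum_sub_distrib,
    ← Finset.sum_add_distrib]
  exact Finset.sum_congr rfl fun i _ => by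
    simp only [Pi.sub_apply, Pi.smul_apply, smul_eq_mul]; ring

end Norms

section PseudoInverse

variable {M N : ℕ}

noncomputable def pseudoInv (A : Matrix (Fin M) (Fin N) ℝ) : Matrix (Fin N) (Fin M) ℝ :=
  Aᵀ * (A * Aᵀ)⁻¹

variable {A : Matrix (Fin M) (Fin N) ℝ}

theorem mulVec_pseudoInv_mulVec (hA : IsUnit (A * Aᵀ).det) (e : Fin M → ℝ) :
    A *ᵥ (pseudoInv A *ᵥ e) = e := by
  rw [mulVec_mulVec, pseudoInv, ← Matrix.mul_assoc, mul_nonsing_inv _ hA, one_mulVec]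

theorem pseudoInv_mulVec_dotProduct_of_mulVec_eq_zero {z : Fin N → ℝ} (hz : A *ᵥ z = 0)
    (e : Fin M → ℝ) : pseudoInv A *ᵥ e ⬝ᵥ z = 0 := by
  rw [dotProduct_comm, dotProduct_mulVec, pseudoInv, ← vecMul_vecMul, vecMul_transpose, hz,
    zero_vecMul, zero_dotProduct]

theorem mulVec_sub_pseudoInv_mulVec (hA : IsUnit (A * Aᵀ).det) (g : Fin N → ℝ) :
    A *ᵥ (g - pseudoInv A *ᵥ (A *ᵥ g)) = 0 := by
  rw [mulVec_sub, mulVec_pseudoInv_mulVec hA, sub_self]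

theorem l2_sub_pseudoInv_mulVec_sq_le (hA : IsUnit (A * Aᵀ).det) (g : Fin N → ℝ) :
    l2 (g - pseudoInv A *ᵥ (A *ᵥ g)) ^ 2 ≤ l2 g ^ 2 := by
  have h := l2_add_sq_of_dotProduct_eq_zero <| (dotProduct_comm _ _).trans <|
    pseudoInv_mulVec_dotProduct_of_mulVec_eq_zero (mulVec_sub_pseudoInv_mulVec hA g) (A *ᵥ g)
  rw [sub_add_cancel] at h
  linarith [sq_nonneg (l2 (pseudoInv A *ᵥ (A *ᵥ g)))]

theorem pseudoInv_mulVec_mulVec_dotProduct_comm (hA : IsUnit (A * Aᵀ).det) (u v : Fin N → ℝ) :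
    pseudoInv A *ᵥ (A *ᵥ u) ⬝ᵥ v = u ⬝ᵥ pseudoInv A *ᵥ (A *ᵥ v) := by
  have hu := pseudoInv_mulVec_dotProduct_of_mulVec_eq_zero
    (mulVec_sub_pseudoInv_mulVec hA v) (A *ᵥ u)
  have hv := pseudoInv_mulVec_dotProduct_of_mulVec_eq_zero
    (mulVec_sub_pseudoInv_mulVec hA u) (A *ᵥ v)
  rw [dotProduct_sub] at hu hv
  rw [dotProduct_comm u]
  linarith [dotProduct_comm (pseudoInv A *ᵥ (A *ᵥ u)) (pseudoInv A *ᵥ (A *ᵥ v))]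

theorem sub_eq_sub_smul_of_iterate (B : Matrix (Fin N) (Fin M) ℝ) {x xs g xt xp : Fin N → ℝ}
    {y : Fin M → ℝ} {κ : ℝ} (hfeas : A *ᵥ x = y) (hxt : xt = x - κ • g)
    (hxp : xp = xt + B *ᵥ (y - A *ᵥ xt)) :
    xp - xs = (x - xs) - κ • (g - B *ᵥ (A *ᵥ g)) := by
  subst hxt hxp hfeas
  simp only [mulVec_sub, mulVec_smul, smul_sub]
  abel

end PseudoInverse

namespace IsWCSM

variable {F : ℝ → ℝ} {ρ α : ℝ}

theorem apply_abs (hF : IsWCSM F ρ) (t : ℝ) : F |t| = F t := by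
  rcases abs_choice t with h | h <;> simp [h, hF.even]

theorem nonneg (hF : IsWCSM F ρ) (t : ℝ) : 0 ≤ F t := by
  rw [← hF.apply_abs, ← hF.zero]
  exact hF.mono 0 |t| le_rfl (abs_nonneg t)

theorem add_le_of_nonneg (hF : IsWCSM F ρ) {a b : ℝ} (ha : 0 ≤ a) (hb : 0 ≤ b) :
    F (a + b) ≤ F a + F b := by
  rcases ha.eq_or_lt with rfl | ha
  · simp [hF.zero]
  rcases hb.eq_or_lt with rfl | hb
  · simp [hF.zero]
  have hFa := (le_div_iff₀ ha).mp (hF.ratio_anti a (a + b) ha (by linarith))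
  have hFb := (le_div_iff₀ hb).mp (hF.ratio_anti b (a + b) hb (by linarith))
  calc F (a + b) = F (a + b) / (a + b) * a + F (a + b) / (a + b) * b := by field_simp
    _ ≤ F a + F b := add_le_add hFa hFb

theorem add_le (hF : IsWCSM F ρ) (u v : ℝ) : F (u + v) ≤ F u + F v := by
  rw [← hF.apply_abs u, ← hF.apply_abs v, ← hF.apply_abs (u + v)]
  exact (hF.mono _ _ (abs_nonneg _) (abs_add_le u v)).trans
    (hF.add_le_of_nonneg (abs_nonneg u) (abs_nonneg v))

theorem sub_le (hF : IsWCSM F ρ) (hα : IsAlpha F α) (u v : ℝ) :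
    F u - F v ≤ α * |u - v| := by
  have := hF.add_le v (u - v)
  rw [add_sub_cancel] at this
  linarith [hα.2.2 (u - v)]

/-- Adding `-ρ t²` convexifies `F` on `[0,∞)`; evenness and monotonicity extend this to
`ℝ`. -/
theorem convexOn_sub_mul_sq (hF : IsWCSM F ρ) :
    ConvexOn ℝ univ (fun t => F t - ρ * t ^ 2) := by
  set G : ℝ → ℝ := fun t => F t - ρ * t ^ 2
  have hρ := hF.rho_nonpos
  have G_abs (t : ℝ) : G |t| = G t := by simp [G, hF.apply_abs]
  have G_mono {s t : ℝ} (hs : 0 ≤ s) (hst : s ≤ t) : G s ≤ G t := by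
    have := hF.mono s t hs hst
    simp only [G]
    nlinarith [mul_le_mul_of_nonpos_left (pow_le_pow_left₀ hs hst 2) hρ]
  refine ⟨convex_univ, fun a _ b _ l m hl hm hlm => ?_⟩
  obtain rfl : m = 1 - l := by linarith
  have h_abs : |l * a + (1 - l) * b| ≤ l * |a| + (1 - l) * |b| := by
    simpa [abs_mul, abs_of_nonneg hl, abs_of_nonneg hm] using abs_add_le (l * a) ((1 - l) * b)
  have hconv := hF.wconv |a| |b| (abs_nonneg a) (abs_nonneg b) l hl (by linarith)
  calc G (l • a + (1 - l) • b) = G |l * a + (1 - l) * b| := (G_abs _).symm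
    _ ≤ G (l * |a| + (1 - l) * |b|) := G_mono (abs_nonneg _) h_abs
    _ ≤ l * G |a| + (1 - l) * G |b| := by
      simp only [G]
      nlinarith [sq_abs a, sq_abs b]
    _ = l • G a + (1 - l) • G b := by simp [G_abs]

theorem div_pos_of_pos (hF : IsWCSM F ρ) {M0 : ℝ} (hM0 : 0 < M0) : 0 < F M0 / M0 := by
  obtain ⟨t, ht⟩ := hF.nontrivial
  rw [← hF.apply_abs] at ht
  have ht0 : 0 < |t| := (abs_nonneg t).lt_of_ne fun h => ht (by rw [← h, hF.zero])
  have hFt : 0 < F |t| := (hF.nonneg _).lt_of_ne' ht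
  rcases le_or_gt |t| M0 with h | h
  · exact div_pos (hFt.trans_le (hF.mono _ _ ht0.le h)) hM0
  · exact (div_pos hFt ht0).trans_le (hF.ratio_anti M0 |t| hM0 h.le)

theorem div_mul_min_le (hF : IsWCSM F ρ) {M0 : ℝ} (hM0 : 0 < M0) (t : ℝ) :
    F M0 / M0 * min |t| M0 ≤ F t := by
  rw [← hF.apply_abs t]
  rcases le_or_gt |t| M0 with h | h
  · rw [min_eq_left h]
    rcases (abs_nonneg t).eq_or_lt with h0 | h0
    · rw [← h0, mul_zero]; exact hF.nonneg 0
    · exact (le_div_iff₀ h0).mp (hF.ratio_anti |t| M0 h0 h)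
  · rw [min_eq_right h.le, div_mul_cancel₀ _ hM0.ne']
    exact hF.mono _ _ hM0.le h.le

theorem limsup_slope_le (hF : IsWCSM F ρ) (hα : IsAlpha F α) {t ν b : ℝ}
    (h : ∀ᶠ θ in 𝓝[>] 0, (F (t + θ * ν) - F t) / θ ≤ b) :
    limsup (fun θ => (F (t + θ * ν) - F t) / θ) (𝓝[>] 0) ≤ b := by
  refine limsup_le_of_le (isCoboundedUnder_le_of_eventually_le _ (x := -(α * |ν|)) ?_) h
  filter_upwards [self_mem_nhdsWithin] with θ (hθ : 0 < θ)
  have := hF.sub_le hα t (t + θ * ν)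
  rw [show t - (t + θ * ν) = -(θ * ν) by ring, abs_neg, abs_mul, abs_of_pos hθ] at this
  rw [le_div_iff₀ hθ]
  linarith

theorem mul_le_of_mem_genGrad (hF : IsWCSM F ρ) (hα : IsAlpha F α) {t g : ℝ}
    (hg : g ∈ genGrad F t) (ν : ℝ) : ν * g ≤ α * |ν| := by
  by_cases ht : t = 0
  · simp only [genGrad, if_pos ht, mem_singleton_iff] at hg
    simpa [hg] using mul_nonneg hα.1.le (abs_nonneg ν)
  rw [genGrad, if_neg ht] at hg
  refine (hg ν).trans (hF.limsup_slope_le hα ?_)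
  filter_upwards [self_mem_nhdsWithin] with θ (hθ : 0 < θ)
  have := hF.sub_le hα (t + θ * ν) t
  rw [add_sub_cancel_left, abs_mul, abs_of_pos hθ] at this
  rw [div_le_iff₀ hθ]
  linarith

theorem abs_le_of_mem_genGrad (hF : IsWCSM F ρ) (hα : IsAlpha F α) {t g : ℝ}
    (hg : g ∈ genGrad F t) : |g| ≤ α := by
  have h₁ := hF.mul_le_of_mem_genGrad hα hg 1
  have h₂ := hF.mul_le_of_mem_genGrad hα hg (-1)
  simp only [one_mul, neg_mul, abs_one, abs_neg, mul_one] at h₁ h₂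
  exact abs_le.2 ⟨by linarith, h₁⟩

theorem mul_sub_le_of_mem_genGrad (hF : IsWCSM F ρ) (hα : IsAlpha F α) {t g : ℝ}
    (hg : g ∈ genGrad F t) (u : ℝ) : g * (u - t) ≤ F u - F t - ρ * (u - t) ^ 2 := by
  by_cases ht : t = 0
  · simp only [genGrad, if_pos ht, mem_singleton_iff] at hg
    subst ht hg
    nlinarith [hF.nonneg u, hF.zero, hF.rho_nonpos, sq_nonneg u]
  rw [genGrad, if_neg ht] at hg
  refine (mul_comm g _).trans_le ((hg (u - t)).trans (hF.limsup_slope_le hα ?_))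
  filter_upwards [Ioc_mem_nhdsGT one_pos] with θ ⟨hθ0, hθ1⟩
  -- the slopes of the convex function `F - ρ t²` increase
  have hconv := hF.convexOn_sub_mul_sq.2 (mem_univ u) (mem_univ t) hθ0.le
    (by linarith : 0 ≤ 1 - θ) (by ring)
  simp only [smul_eq_mul, show θ * u + (1 - θ) * t = t + θ * (u - t) by ring] at hconv
  rw [div_le_iff₀ hθ0]
  have hρ := hF.rho_nonpos
  nlinarith [mul_nonpos_of_nonpos_of_nonneg hρ (mul_nonneg hθ0.le (sq_nonneg (u - t))),
    mul_nonpos_of_nonpos_of_nonneg hρ (mul_nonneg (sq_nonneg θ) (sq_nonneg (u - t)))]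

theorem sum_sub_sum_add_le_dotProduct (hF : IsWCSM F ρ) (hα : IsAlpha F α) {n : ℕ}
    {x g : Fin n → ℝ} (hg : ∀ i, g i ∈ genGrad F (x i)) (xs : Fin n → ℝ) :
    ∑ i, F (x i) - ∑ i, F (xs i) + ρ * l2 (x - xs) ^ 2 ≤ g ⬝ᵥ (x - xs) := by
  have key (i : Fin n) : F (x i) - F (xs i) + ρ * (x - xs) i ^ 2 ≤ g i * (x - xs) i := by
    have := hF.mul_sub_le_of_mem_genGrad hα (hg i) (xs i)
    simp only [Pi.sub_apply]
    linarith
  rw [l2_sq, Finset.mul_sum, ← Finset.sum_sub_distrib, ← Finset.sum_add_distrib]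
  exact Finset.sum_le_sum fun i _ => key i

theorem sum_restr (hF : IsWCSM F ρ) {n : ℕ} (z : Fin n → ℝ) (T : Finset (Fin n)) :
    ∑ i, F (restr z T i) = ∑ i ∈ T, F (z i) := by
  simp [restr, apply_ite F, hF.zero, Finset.sum_ite_mem]

theorem sum_compl_sub_sum_sub_le (hF : IsWCSM F ρ) {n : ℕ} {S : Finset (Fin n)}
    {xs : Fin n → ℝ} (hxs : ∀ i ∉ S, xs i = 0) (z w : Fin n → ℝ) :
    ∑ i ∈ Sᶜ, F (z i) - ∑ i ∈ S, F (z i) - ∑ i, F (w i)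
      ≤ ∑ i, F (xs i + z i + w i) - ∑ i, F (xs i) := by
  have hS : ∀ i ∈ S, -F (z i) - F (w i) ≤ F (xs i + z i + w i) - F (xs i) := fun i _ => by
    have h₁ := hF.add_le (xs i + z i + w i) (-z i + -w i)
    have h₂ := hF.add_le (-z i) (-w i)
    rw [show xs i + z i + w i + (-z i + -w i) = xs i by ring] at h₁
    rw [hF.even, hF.even] at h₂
    linarith
  have hSc : ∀ i ∈ Sᶜ, F (z i) - F (w i) ≤ F (xs i + z i + w i) - F (xs i) := fun i hi => by
    have := hF.add_le (z i + w i) (-w i)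
    rw [add_neg_cancel_right, hF.even] at this
    rw [hxs i (Finset.mem_compl.1 hi), hF.zero, zero_add, sub_zero]
    linarith
  have h₁ := Finset.sum_le_sum hS
  have h₂ := Finset.sum_le_sum hSc
  simp only [Finset.sum_sub_distrib, Finset.sum_neg_distrib] at h₁ h₂
  rw [← Finset.sum_add_sum_compl S fun i => F (w i),
    ← Finset.sum_add_sum_compl S fun i => F (xs i + z i + w i),
    ← Finset.sum_add_sum_compl S fun i => F (xs i)]
  linarith

theorem div_mul_sum_le_of_nscBound (hF : IsWCSM F ρ) {M n K : ℕ}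
    {A : Matrix (Fin M) (Fin n) ℝ} {γ : ℝ} (hγ0 : 0 ≤ γ)
    (hNSC : NSCBound (fun x => ∑ i, F (x i)) A K γ) {z : Fin n → ℝ} (hz : A *ᵥ z = 0)
    {S : Finset (Fin n)} (hS : S.card ≤ K) :
    (1 - γ) / (1 + γ) * ∑ i, F (z i) ≤ ∑ i ∈ Sᶜ, F (z i) - ∑ i ∈ S, F (z i) := by
  have h := hNSC z hz S hS
  simp only [hF.sum_restr] at h
  rw [← Finset.sum_add_sum_compl S, div_mul_eq_mul_div, div_le_iff₀ (by linarith)]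
  nlinarith [Finset.sum_nonneg fun i (_ : i ∈ Sᶜ) => hF.nonneg (z i)]

theorem div_mul_min_l2_le_sum (hF : IsWCSM F ρ) {M0 : ℝ} (hM0 : 0 < M0) {n : ℕ}
    (z : Fin n → ℝ) : F M0 / M0 * min (l2 z) M0 ≤ ∑ i, F (z i) := by
  have hmin : min (l2 z) M0 ≤ ∑ i, min |z i| M0 := by
    by_cases hall : ∀ i, |z i| ≤ M0
    · calc min (l2 z) M0 ≤ l1 z := (min_le_left _ _).trans (l2_le_l1 z)
        _ = ∑ i, min |z i| M0 := Finset.sum_congr rfl fun i _ => (min_eq_left (hall i)).symm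
    · simp only [not_forall, not_le] at hall
      obtain ⟨i, hi⟩ := hall
      calc min (l2 z) M0 ≤ min |z i| M0 := by rw [min_eq_right hi.le]; exact min_le_right _ _
        _ ≤ ∑ j, min |z j| M0 :=
          Finset.single_le_sum (fun j _ => le_min (abs_nonneg _) hM0.le) (Finset.mem_univ i)
  calc F M0 / M0 * min (l2 z) M0 ≤ F M0 / M0 * ∑ i, min |z i| M0 :=
        mul_le_mul_of_nonneg_left hmin (hF.div_pos_of_pos hM0).le
    _ = ∑ i, F M0 / M0 * min |z i| M0 := Finset.mul_sum _ _ _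
    _ ≤ ∑ i, F (z i) := Finset.sum_le_sum fun i _ => hF.div_mul_min_le hM0 (z i)

theorem sum_sub_sum_ge_of_nscBound (hF : IsWCSM F ρ) (hα : IsAlpha F α) {M n K : ℕ}
    {A : Matrix (Fin M) (Fin n) ℝ} {γ : ℝ} (hγ0 : 0 ≤ γ) (hγ1 : γ < 1)
    (hNSC : NSCBound (fun x => ∑ i, F (x i)) A K γ) {M0 : ℝ} (hM0 : 0 < M0)
    {S : Finset (Fin n)} (hS : S.card ≤ K) {xs : Fin n → ℝ} (hxs : ∀ i ∉ S, xs i = 0)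
    {x w : Fin n → ℝ} (hz : A *ᵥ (x - xs - w) = 0) (hball : l2 (x - xs) ≤ M0) :
    F M0 / M0 * ((1 - γ) / (1 + γ)) * (l2 (x - xs) - l2 w) - α * (√n * l2 w)
      ≤ ∑ i, F (x i) - ∑ i, F (xs i) := by
  set z := x - xs - w
  have hJw : ∑ i, F (w i) ≤ α * (√n * l2 w) :=
    calc ∑ i, F (w i) ≤ ∑ i, α * |w i| := Finset.sum_le_sum fun i _ => hα.2.2 _
      _ = α * l1 w := by rw [l1, Finset.mul_sum]
      _ ≤ α * (√n * l2 w) := mul_le_mul_of_nonneg_left (l1_le_sqrt_mul_l2 w) hα.1.le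
  have hmin : l2 (x - xs) - l2 w ≤ min (l2 z) M0 :=
    le_min (by linarith [sub_add_cancel (x - xs) w ▸ l2_add_le z w]) (by linarith [l2_nonneg w])
  have hcut := hF.sum_compl_sub_sum_sub_le hxs z w
  simp only [show ∀ i, xs i + z i + w i = x i from fun i => by simp only [z, Pi.sub_apply]; ring]
    at hcut
  have hc : 0 ≤ (1 - γ) / (1 + γ) := div_nonneg (by linarith) (by linarith)
  have := mul_le_mul_of_nonneg_left
    ((mul_le_mul_of_nonneg_left hmin (hF.div_pos_of_pos hM0).le).trans
      (hF.div_mul_min_l2_le_sum hM0 z)) hc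
  linarith [hF.div_mul_sum_le_of_nscBound hγ0 hNSC hz hS]

end IsWCSM

theorem mul_le_of_far {Q J r W E ρ a b σ κ C1 C2 : ℝ}
    (hQ : J + ρ * r ^ 2 - a * W ≤ Q) (hJ : C1 * (r - W) - a * W ≤ J)
    (hρ : -4 * ρ * r ≤ C1) (hr : 0 ≤ r) (hW : σ * W ≤ E) (hW0 : 0 ≤ W)
    (hσ : 0 < σ) (ha : 0 ≤ a) (hb : 0 ≤ b) (hκ : 0 ≤ κ) (hC1 : 0 < C1)
    (hC2 : C2 = (a + C1) / (C1 * σ)) (hfar : 2 * b / C1 * κ + 4 * C2 * E ≤ r) :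
    b * κ ≤ Q := by
  have hC12 : C1 * C2 * σ = a + C1 := by rw [hC2]; field_simp
  have hE : 0 ≤ E := (mul_nonneg hσ.le hW0).trans hW
  have hC12E : 0 ≤ C1 * C2 * E := mul_nonneg (by nlinarith) hE
  have hfar' : 2 * b * κ + 4 * (C1 * C2 * E) ≤ C1 * r := by
    have h := mul_le_mul_of_nonneg_left hfar hC1.le
    have e : C1 * (2 * b / C1 * κ + 4 * C2 * E) = 2 * b * κ + 4 * (C1 * C2 * E) := by
      field_simp
    linarith
  -- `(C1 + 2a) W ≤ 2 (C1 + a) W = 2 C1 C2 σ W ≤ 2 C1 C2 E`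
  have hW' : (C1 + 2 * a) * W ≤ 2 * (C1 * C2 * E) := by
    nlinarith [mul_le_mul_of_nonneg_left hW (by nlinarith : 0 ≤ C1 * C2)]
  nlinarith [mul_le_mul_of_nonneg_right hρ hr, mul_nonneg hb hκ]

theorem stmt12_general {M N : ℕ} (F : ℝ → ℝ) (ρ α : ℝ)
    (hF : IsWCSM F ρ) (hα : IsAlpha F α)
    (A : Matrix (Fin M) (Fin N) ℝ) (hinv : IsUnit (A * A.transpose).det) (K : ℕ)
    (γ : ℝ) (hγ0 : 0 ≤ γ) (hγ1 : γ < 1)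
    (hNSC : NSCBound (fun x => ∑ i, F (x i)) A K γ)
    (σ : ℝ) (hσ : 0 < σ)
    (hσmin : ∀ v : Fin N → ℝ,
      (∀ z : Fin N → ℝ, A.mulVec z = 0 → (∑ i, v i * z i) = 0) →
      σ * l2 v ≤ l2 (A.mulVec v))
    (M0 : ℝ) (hM0 : 0 < M0) (C1 C2 : ℝ)
    (hC1 : C1 = F M0 / M0 * ((1 - γ) / (1 + γ)))
    (hC2 : C2 = (α * Real.sqrt N + C1) / (C1 * σ))
    (xs : Fin N → ℝ) (hxs : l0 xs ≤ K)
    (e : Fin M → ℝ) (y : Fin M → ℝ) (hy : y = A.mulVec xs + e)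
    (κ μ : ℝ) (hκ : 0 < κ) (hμ : 1 < μ)
    (x : Fin N → ℝ) (hfeas : A.mulVec x = y)
    (hball : l2 (x - xs) ≤ M0)
    (hrho : -4 * ρ * l2 (x - xs) ≤ C1)
    (hfar : 2 * μ * α ^ 2 * N / C1 * κ + 4 * C2 * l2 e ≤ l2 (x - xs))
    (g : Fin N → ℝ) (hg : ∀ i, g i ∈ genGrad F (x i))
    (xt xp : Fin N → ℝ)
    (hxt : xt = x - κ • g)
    (hxp : xp = xt + (A.transpose * (A * A.transpose)⁻¹).mulVec (y - A.mulVec xt)) :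
    l2 (xp - xs) ^ 2 ≤ l2 (x - xs) ^ 2 - (μ - 1) * α ^ 2 * N * κ ^ 2 := by
  set w := pseudoInv A *ᵥ e
  set q := g - pseudoInv A *ᵥ (A *ᵥ g)
  have hAd : A *ᵥ (x - xs) = e := by rw [mulVec_sub, hfeas, hy, add_sub_cancel_left]
  have hker : A *ᵥ (x - xs - w) = 0 := by
    rw [mulVec_sub, hAd, mulVec_pseudoInv_mulVec hinv, sub_self]
  have hw : σ * l2 w ≤ l2 e := by
    have hAw : A *ᵥ w = e := mulVec_pseudoInv_mulVec hinv e
    simpa only [hAw] using hσmin w fun z hz => pseudoInv_mulVec_dotProduct_of_mulVec_eq_zero hz e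
  have hgα (i : Fin N) : |g i| ≤ α := hF.abs_le_of_mem_genGrad hα (hg i)
  have hq : l2 q ^ 2 ≤ N * α ^ 2 :=
    (l2_sub_pseudoInv_mulVec_sq_le hinv g).trans (l2_sq_le_of_abs_le hgα)
  have hqd : q ⬝ᵥ (x - xs) = g ⬝ᵥ (x - xs) - g ⬝ᵥ w := by
    rw [sub_dotProduct, pseudoInv_mulVec_mulVec_dotProduct_comm hinv, hAd]
  have hgw : g ⬝ᵥ w ≤ α * (√N * l2 w) :=
    (dotProduct_le_mul_l1 hgα w).trans (mul_le_mul_of_nonneg_left (l1_le_sqrt_mul_l2 w) hα.1.le)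
  have hJ := hF.sum_sub_sum_ge_of_nscBound hα hγ0 hγ1 hNSC hM0 (S := {i | xs i ≠ 0}) hxs
    (fun i hi => by simpa using hi) hker hball
  rw [← hC1] at hJ
  have hC1pos : 0 < C1 :=
    hC1 ▸ mul_pos (hF.div_pos_of_pos hM0) (div_pos (by linarith) (by linarith))
  have hb : 0 ≤ μ * α ^ 2 * N :=
    mul_nonneg (mul_nonneg (by linarith) (sq_nonneg α)) N.cast_nonneg
  have hdescent : μ * α ^ 2 * N * κ ≤ q ⬝ᵥ (x - xs) :=
    mul_le_of_far (J := ∑ i, F (x i) - ∑ i, F (xs i))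
      (by linarith [hF.sum_sub_sum_add_le_dotProduct hα hg xs]) (by linarith [hJ])
      hrho (l2_nonneg _) hw (l2_nonneg w) hσ (mul_nonneg hα.1.le (Real.sqrt_nonneg _))
      hb hκ.le hC1pos hC2
      (by convert hfar using 3; ring)
  have hstep : xp - xs = (x - xs) - κ • q := sub_eq_sub_smul_of_iterate _ hfeas hxt hxp
  rw [hstep, l2_sub_smul_sq]
  nlinarith [mul_le_mul_of_nonneg_left hdescent (by positivity : (0 : ℝ) ≤ 2 * κ),
    mul_le_mul_of_nonneg_left hq (sq_nonneg κ), mul_nonneg hb (sq_nonneg κ)]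

/-- Lemma 5, one PGG step: if the current iterate `x` is within the
good region and not too close to `x*`, the next PGG iterate strictly decreases the
squared distance by at least `(μ−1)α²Nκ²`. -/
theorem stmt12 {M N : ℕ} (hMN : M < N) (F : ℝ → ℝ) (ρ α : ℝ)
    (hF : IsWCSM F ρ) (hα : IsAlpha F α)
    (A : Matrix (Fin M) (Fin N) ℝ) (hinv : IsUnit (A * A.transpose).det) (K : ℕ)
    (γ : ℝ) (hγ0 : 0 ≤ γ) (hγ1 : γ < 1)
    (hNSC : NSCBound (fun x => ∑ i, F (x i)) A K γ)
    (σ : ℝ) (hσ : 0 < σ)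
    (hσmin : ∀ v : Fin N → ℝ,
      (∀ z : Fin N → ℝ, A.mulVec z = 0 → (∑ i, v i * z i) = 0) →
      σ * l2 v ≤ l2 (A.mulVec v))
    (M0 : ℝ) (hM0 : 0 < M0) (C1 C2 : ℝ)
    (hC1 : C1 = F M0 / M0 * ((1 - γ) / (1 + γ)))
    (hC2 : C2 = (α * Real.sqrt N + C1) / (C1 * σ))
    (xs : Fin N → ℝ) (hxs : l0 xs ≤ K)
    (e : Fin M → ℝ) (y : Fin M → ℝ) (hy : y = A.mulVec xs + e)
    (κ μ : ℝ) (hκ : 0 < κ) (hμ : 1 < μ)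
    (x : Fin N → ℝ) (hfeas : A.mulVec x = y)
    (hball : l2 (x - xs) ≤ M0)
    (hrho : -4 * ρ * l2 (x - xs) ≤ C1)
    (hfar : 2 * μ * α ^ 2 * N / C1 * κ + 4 * C2 * l2 e ≤ l2 (x - xs))
    (g : Fin N → ℝ) (hg : ∀ i, g i ∈ genGrad F (x i))
    (xt xp : Fin N → ℝ)
    (hxt : xt = x - κ • g)
    (hxp : xp = xt + (A.transpose * (A * A.transpose)⁻¹).mulVec (y - A.mulVec xt)) :
    l2 (xp - xs) ^ 2 ≤ l2 (x - xs) ^ 2 - (μ - 1) * α ^ 2 * N * κ ^ 2 :=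
  stmt12_general F ρ α hF hα A hinv K γ hγ0 hγ1 hNSC σ hσ hσmin M0 hM0 C1 C2 hC1 hC2 xs hxs e y hy κ
    μ hκ hμ x hfeas hball hrho hfar g hg xt xp hxt hxp
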